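/- Let (Ω, P) be a probability space and let X : Fin 2 × Fin 2 → Fin N → Ω → ℝ be a mutually independent family of random variables, each taking values in {−1, 1}, such that for each (i,j) all N variables X (i,j) k have common mean μ(i,j). Let S = μ(0,0) + μ(1,0) + μ(0,1) − μ(1,1) and S̄ = m(0,0) + m(1,0) + m(0,1) − m(1,1) with m(i,j) = (1/N) ∑ₖ X (i,j) k. Then for every ε > 0, P[|S̄ − S| > ε] ≤ 4/(N ε²). In particular, for 0 < ε < 2√2 and 0 < δ < 1, if N ≥ 4/(δ ε²) then P[|S̄ − S| > ε] ≤ δ. -/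

import Mathlib

/-!
Write `S̄ = ∑ c(i,j)/N · X (i,j) k` over all `4N` samples, with CHSH signs `c = ±1`. Its mean is
`S`, and since the samples are independent and `[-1, 1]`-valued (so of variance at most `1` by
Popoviciu's inequality), its variance is at most `4N · (1/N)² = 4/N`. Chebyshev's inequality
gives the first bound, and `N ≥ 4/(δ ε²)` makes it at most `δ`.
-/

open MeasureTheory ProbabilityTheory Finset

noncomputable section

/-- Empirical mean `m(i,j) = (1/N) ∑ₖ X (i,j) k`. -/
def empMean {Ω : Type*} {N : ℕ} (X : Fin 2 × Fin 2 → Fin N → Ω → ℝ)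
    (ij : Fin 2 × Fin 2) (ω : Ω) : ℝ :=
  (1 / N) * ∑ k, X ij k ω

/-- Empirical CHSH estimate `S̄ = m(0,0) + m(1,0) + m(0,1) − m(1,1)`. -/
def SbarEmp {Ω : Type*} {N : ℕ} (X : Fin 2 × Fin 2 → Fin N → Ω → ℝ) (ω : Ω) : ℝ :=
  empMean X (0, 0) ω + empMean X (1, 0) ω + empMean X (0, 1) ω - empMean X (1, 1) ω

/-- True CHSH value `S = μ(0,0) + μ(1,0) + μ(0,1) − μ(1,1)`. -/
def Strue (μ : Fin 2 × Fin 2 → ℝ) : ℝ := μ (0, 0) + μ (1, 0) + μ (0, 1) - μ (1, 1)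

end

section IndependentSum

variable {Ω ι : Type*} [MeasurableSpace Ω] {P : Measure Ω}

lemma measure_lt_abs_sub_integral_toReal_le [IsFiniteMeasure P] {Y : Ω → ℝ} (hY : MemLp Y 2 P)
    {ε : ℝ} (hε : 0 < ε) : (P {ω | ε < |Y ω - P[Y]|}).toReal ≤ Var[Y; P] / ε ^ 2 := by
  refine ENNReal.toReal_le_of_le_ofReal (div_nonneg (variance_nonneg _ _) (sq_nonneg _)) ?_
  exact (measure_mono (Set.ofPred_subset_ofPred.mpr fun _ ↦ le_of_lt)).trans
    (meas_ge_le_variance_div_sq hY hε)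

variable [IsProbabilityMeasure P] [Fintype ι] {Y : ι → Ω → ℝ}

lemma variance_sum_mul_le_sum_sq (hY : ∀ i, Measurable (Y i)) (hind : iIndepFun Y P)
    (hbdd : ∀ i ω, Y i ω ∈ Set.Icc (-1) 1) (w : ι → ℝ) :
    Var[fun ω ↦ ∑ i, w i * Y i ω; P] ≤ ∑ i, w i ^ 2 := by
  have hL2 : ∀ i ∈ (univ : Finset ι), MemLp (fun ω ↦ w i * Y i ω) 2 P := fun i _ ↦
    (memLp_of_bounded (ae_of_all _ (hbdd i)) (hY i).aestronglyMeasurable 2).const_mul (w i)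
  have hpair : Set.Pairwise ↑(univ : Finset ι) fun i j ↦
      (fun ω ↦ w i * Y i ω) ⟂ᵢ[P] (fun ω ↦ w j * Y j ω) := fun i _ j _ hij ↦
    (hind.indepFun hij).comp (measurable_const_mul _) (measurable_const_mul _)
  calc Var[fun ω ↦ ∑ i, w i * Y i ω; P]
      = ∑ i, Var[fun ω ↦ w i * Y i ω; P] := by
        rw [← IndepFun.variance_sum hL2 hpair, Finset.sum_fn]
    _ = ∑ i, w i ^ 2 * Var[Y i; P] := by simp only [variance_const_mul]
    _ ≤ ∑ i, w i ^ 2 * 1 := by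
        gcongr with i
        exact (variance_le_sq_of_bounded (ae_of_all _ (hbdd i)) (hY i).aemeasurable).trans_eq
          (by norm_num)
    _ = ∑ i, w i ^ 2 := by simp only [mul_one]

end IndependentSum

def chshSign (ij : Fin 2 × Fin 2) : ℝ := if ij = (1, 1) then -1 else 1

lemma sq_chshSign (ij : Fin 2 × Fin 2) : chshSign ij ^ 2 = 1 := by
  unfold chshSign; split_ifs <;> norm_num

lemma sum_chshSign_mul (f : Fin 2 × Fin 2 → ℝ) :
    ∑ ij, chshSign ij * f ij = f (0, 0) + f (1, 0) + f (0, 1) - f (1, 1) := by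
  simp only [chshSign, Fintype.sum_prod_type, Fin.sum_univ_two, Prod.mk.injEq, Fin.isValue,
    zero_ne_one, and_false, and_true, ↓reduceIte, ite_mul, neg_mul, one_mul]
  ring

section CHSH

variable {Ω : Type*} {N : ℕ} (X : Fin 2 × Fin 2 → Fin N → Ω → ℝ)

lemma SbarEmp_eq_sum :
    SbarEmp X = fun ω ↦ ∑ p : (Fin 2 × Fin 2) × Fin N, chshSign p.1 / N * X p.1 p.2 ω := by
  ext ω
  have hinner (ij : Fin 2 × Fin 2) :
      ∑ k, chshSign ij / N * X ij k ω = chshSign ij * empMean X ij ω := by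
    rw [empMean, ← mul_sum]
    ring
  rw [Fintype.sum_prod_type]
  simp only [hinner]
  rw [sum_chshSign_mul]
  rfl

lemma sum_sq_chshSign_div (hN : 0 < N) :
    ∑ p : (Fin 2 × Fin 2) × Fin N, (chshSign p.1 / N) ^ 2 = 4 / N := by
  simp only [div_pow, sq_chshSign, sum_const, card_univ, Fintype.card_prod, Fintype.card_fin,
    nsmul_eq_mul, Nat.cast_mul, Nat.cast_ofNat]
  field_simp
  norm_num

lemma integral_SbarEmp [MeasurableSpace Ω] {P : Measure Ω} (hN : 0 < N)
    (hint : ∀ ij k, Integrable (X ij k) P) {μ : Fin 2 × Fin 2 → ℝ}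
    (hmean : ∀ ij k, ∫ ω, X ij k ω ∂P = μ ij) :
    P[SbarEmp X] = Strue μ := by
  rw [SbarEmp_eq_sum, integral_finsetSum _ fun p _ ↦ (hint p.1 p.2).const_mul _]
  have hcancel (ij : Fin 2 × Fin 2) : (N : ℝ) * (chshSign ij / N * μ ij) = chshSign ij * μ ij := by
    field_simp
  rw [Fintype.sum_prod_type]
  simp only [integral_const_mul, hmean, sum_const, card_univ, Fintype.card_fin, nsmul_eq_mul,
    hcancel]
  exact sum_chshSign_mul μ

end CHSH

/-- Chebyshev-based sample complexity for CHSH estimation: for every `ε > 0`,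
`P[|S̄ − S| > ε] ≤ 4/(N ε²)`; in particular, for `0 < ε < 2√2` and `0 < δ < 1`,
`N ≥ 4/(δ ε²)` copies suffice to guarantee `P[|S̄ − S| > ε] ≤ δ`. -/
theorem chebyshev_chsh_estimate {Ω : Type*} [MeasurableSpace Ω]
    (P : Measure Ω) [IsProbabilityMeasure P] (N : ℕ) (hN : 0 < N)
    (X : Fin 2 × Fin 2 → Fin N → Ω → ℝ)
    (hmeas : ∀ ij k, Measurable (X ij k))
    (hindep : iIndepFun (fun p : (Fin 2 × Fin 2) × Fin N => X p.1 p.2) P)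
    (hval : ∀ ij k ω, X ij k ω = 1 ∨ X ij k ω = -1)
    (μ : Fin 2 × Fin 2 → ℝ)
    (hmean : ∀ ij k, ∫ ω, X ij k ω ∂P = μ ij) :
    (∀ ε : ℝ, 0 < ε →
      (P {ω | ε < |SbarEmp X ω - Strue μ|}).toReal ≤ 4 / (N * ε ^ 2)) ∧
    (∀ ε δ : ℝ, 0 < ε → ε < 2 * Real.sqrt 2 → 0 < δ → δ < 1 →
      (N : ℝ) ≥ 4 / (δ * ε ^ 2) →
      (P {ω | ε < |SbarEmp X ω - Strue μ|}).toReal ≤ δ) := by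
  have hX_Icc (ij k ω) : X ij k ω ∈ Set.Icc (-1) 1 := by
    rcases hval ij k ω with h | h <;> simp [h]
  have hX_L2 (ij k) : MemLp (X ij k) 2 P :=
    memLp_of_bounded (ae_of_all _ (hX_Icc ij k)) (hmeas ij k).aestronglyMeasurable 2
  have hvar : Var[SbarEmp X; P] ≤ 4 / N := by
    rw [SbarEmp_eq_sum, ← sum_sq_chshSign_div hN]
    exact variance_sum_mul_le_sum_sq (fun p : _ × Fin N ↦ hmeas p.1 p.2) hindep
      (fun p : _ × Fin N ↦ hX_Icc p.1 p.2) (fun p ↦ chshSign p.1 / N)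
  have hS_L2 : MemLp (SbarEmp X) 2 P := by
    rw [SbarEmp_eq_sum]
    exact memLp_finsetSum _ fun (p : _ × Fin N) _ ↦ (hX_L2 p.1 p.2).const_mul _
  have hmeanS : P[SbarEmp X] = Strue μ :=
    integral_SbarEmp X hN (fun ij k ↦ (hX_L2 ij k).integrable one_le_two) hmean
  have hbound (ε : ℝ) (hε : 0 < ε) :
      (P {ω | ε < |SbarEmp X ω - Strue μ|}).toReal ≤ 4 / (N * ε ^ 2) :=
    calc (P {ω | ε < |SbarEmp X ω - Strue μ|}).toReal
        ≤ Var[SbarEmp X; P] / ε ^ 2 := hmeanS ▸ measure_lt_abs_sub_integral_toReal_le hS_L2 hε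
      _ ≤ 4 / N / ε ^ 2 := by gcongr
      _ = 4 / (N * ε ^ 2) := div_div _ _ _
  refine ⟨hbound, fun ε δ hε _ hδ _ hNδ ↦ (hbound ε hε).trans ?_⟩
  rw [ge_iff_le, div_le_iff₀ (by positivity)] at hNδ
  rw [div_le_iff₀ (by positivity)]
  linarith
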